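/- Laplace noise calibrated to the utility loss of subsampling: let F^π be a property query on databases of size n whose entries are each independently positive with probability π (0 < π < 1), let m < n, λ = m/n, and choose the Laplace scale ψ > 0 such that the utility losses match, i.e. 2ψ² = π(1−π)·(1/m − 1/n). Then the Laplace mechanism LAP_ψ is (ε, 0)-statistically private with ε = 1/(ψn) = √(2/(π(1−π))) · √(λ/(n−m)). -/

import Mathlib

/-!
Conditioned on the critical entry, the two output distributions are mixtures, over the same
binomial count `j`, of Laplace noise centred at `(j + 1)/n` and at `j/n`. The Laplace density
changes by a factor of at most `exp (|a - b| / ψ)` under a shift from `a` to `b`, so each pair of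
mixture components, and hence the mixtures themselves, are within a factor `exp (1 / (ψ n))` of
each other. The closed form of `ε` is algebra on the calibration `2ψ² = π(1−π)(1/m − 1/n)`.
-/

open MeasureTheory

open scoped ENNReal

lemma ENNReal.toReal_le_mul_toReal_of_le_ofReal_mul {a b : ℝ≥0∞} {r : ℝ} (hr : 0 ≤ r)
    (hab : a ≤ ENNReal.ofReal r * b) (hba : b ≤ ENNReal.ofReal r * a) :
    a.toReal ≤ r * b.toReal := by
  by_cases hb : b = ∞
  · have ha : a = ∞ := by
      by_contra ha
      exact ENNReal.mul_ne_top ENNReal.ofReal_ne_top ha (top_le_iff.mp (hb ▸ hba))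
    simp [ha, hb]
  · simpa [ENNReal.toReal_mul, ENNReal.toReal_ofReal hr] using
      ENNReal.toReal_mono (ENNReal.mul_ne_top ENNReal.ofReal_ne_top hb) hab

lemma MeasureTheory.Measure.bind_le_smul_bind {α β : Type*} [MeasurableSpace α]
    [MeasurableSpace β] {μ : Measure α} {κ η : α → Measure β} (hκ : AEMeasurable κ μ)
    (hη : AEMeasurable η μ) {c : ℝ≥0∞} (h : ∀ a, κ a ≤ c • η a) :
    μ.bind κ ≤ c • μ.bind η := by
  refine Measure.le_iff.mpr fun s hs => ?_
  rw [Measure.smul_apply, Measure.bind_apply hs hκ, Measure.bind_apply hs hη, smul_eq_mul]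
  exact (lintegral_mono fun a => h a s).trans_eq
    (lintegral_const_mul'' c ((Measure.measurable_coe hs).comp_aemeasurable hη))

lemma MeasureTheory.Measure.map_add_const_withDensity {G : Type*} [MeasurableSpace G] [AddGroup G]
    [MeasurableAdd G] (μ : Measure G) [μ.IsAddRightInvariant] (f : G → ℝ≥0∞) (a : G) :
    (μ.withDensity f).map (· + a) = μ.withDensity fun x => f (x - a) := by
  ext s hs
  rw [Measure.map_apply (measurable_add_const a) hs,
    withDensity_apply _ (hs.preimage (measurable_add_const a)), withDensity_apply _ hs,
    ← (measurePreserving_add_right μ a).setLIntegral_comp_preimage_emb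
      (MeasurableEquiv.addRight a).measurableEmbedding (fun x => f (x - a))]
  simp only [add_sub_cancel_right]

noncomputable def laplacePDF (ψ x : ℝ) : ℝ := 1 / (2 * ψ) * Real.exp (-|x| / ψ)

noncomputable def laplaceMeasure (ψ : ℝ) : Measure ℝ :=
  volume.withDensity fun x => ENNReal.ofReal (laplacePDF ψ x)

lemma measurable_laplacePDF (ψ : ℝ) : Measurable (laplacePDF ψ) :=
  (continuous_const.mul (continuous_abs.neg.div_const ψ).rexp).measurable

lemma laplacePDF_sub_le {ψ : ℝ} (hψ : 0 ≤ ψ) (a b x : ℝ) :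
    laplacePDF ψ (x - a) ≤ Real.exp (|a - b| / ψ) * laplacePDF ψ (x - b) := by
  have hexp : Real.exp (-|x - a| / ψ) ≤ Real.exp (|a - b| / ψ) * Real.exp (-|x - b| / ψ) := by
    rw [← Real.exp_add, ← add_div]
    gcongr
    linarith [abs_sub_le x a b]
  unfold laplacePDF
  rw [mul_left_comm]
  gcongr

lemma laplaceMeasure_map_add_le_smul {ψ : ℝ} (hψ : 0 ≤ ψ) (a b : ℝ) :
    (laplaceMeasure ψ).map (· + a)
      ≤ ENNReal.ofReal (Real.exp (|a - b| / ψ)) • (laplaceMeasure ψ).map (· + b) := by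
  have hb : Measurable fun x => ENNReal.ofReal (laplacePDF ψ (x - b)) :=
    ((measurable_laplacePDF ψ).comp (measurable_sub_const b)).ennreal_ofReal
  rw [laplaceMeasure, Measure.map_add_const_withDensity, Measure.map_add_const_withDensity,
    ← withDensity_smul _ hb]
  refine withDensity_mono (ae_of_all _ fun x => ?_)
  simp only [Pi.smul_apply, smul_eq_mul]
  rw [← ENNReal.ofReal_mul (Real.exp_nonneg _)]
  exact ENNReal.ofReal_le_ofReal (laplacePDF_sub_le hψ a b x)

lemma one_div_mul_eq_sqrt_mul_sqrt_of_calibration {n m π ψ : ℝ} (hm : 0 < m) (hmn : m < n)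
    (hπ0 : 0 < π) (hπ1 : π < 1) (hψ : 0 < ψ)
    (hcal : 2 * ψ ^ 2 = π * (1 - π) * (1 / m - 1 / n)) :
    1 / (ψ * n) = √(2 / (π * (1 - π))) * √(m / n / (n - m)) := by
  have hn : 0 < n := hm.trans hmn
  have hnm : 0 < n - m := sub_pos.mpr hmn
  have h1π : 1 - π ≠ 0 := (sub_pos.mpr hπ1).ne'
  have hπ : 0 < π * (1 - π) := mul_pos hπ0 (sub_pos.mpr hπ1)
  have hsq : (1 / (ψ * n)) ^ 2 = 2 / (π * (1 - π)) * (m / n / (n - m)) := by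
    have hcal' : 2 * ψ ^ 2 * (m * n) = π * (1 - π) * (n - m) := by
      rw [hcal]; field_simp
    field_simp
    linear_combination -hcal'
  rw [← Real.sqrt_mul (div_pos two_pos hπ).le, ← hsq, Real.sqrt_sq (by positivity)]

/-- **Laplace noise calibrated to the utility loss of subsampling.**
Each entry of a database of size `n` is independently positive with probability `π`
(`0 < π < 1`) with respect to the property query `F^π`; conditioned on the critical entry,
the number of positive entries is `1 + Bin(n−1,π)` resp. `Bin(n−1,π)` and the Laplace
mechanism `LAP_ψ` releases the fraction plus Laplace noise of scale `ψ > 0`.  Let `m < n`,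
`λ = m/n`, and choose `ψ` so that the utility losses match, i.e.
`2ψ² = π(1−π)·(1/m − 1/n)`.  Then `LAP_ψ` is `(ε, 0)`-statistically private with
`ε = 1/(ψn) = √(2/(π(1−π)))·√(λ/(n−m))`. -/
theorem laplace_calibrated_to_subsampling
    (n m : ℕ) (hm : 0 < m) (hmn : m < n) (π ψ : ℝ)
    (hπ0 : 0 < π) (hπ1 : π < 1) (hψ : 0 < ψ)
    (hcal : 2 * ψ ^ 2 = π * (1 - π) * (1 / (m : ℝ) - 1 / (n : ℝ))) :
    let binom : Measure ℕ :=
      ((PMF.binomial (Real.toNNReal π)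
          (show Real.toNNReal π ≤ 1 from Real.toNNReal_le_one.mpr hπ1.le) (n - 1)).map
        Fin.val).toMeasure
    let lap : Measure ℝ :=
      volume.withDensity fun x => ENNReal.ofReal (1 / (2 * ψ) * Real.exp (-|x| / ψ))
    let μp : Measure ℝ := binom.bind fun j => lap.map fun x => x + ((j : ℝ) + 1) / n
    let μm : Measure ℝ := binom.bind fun j => lap.map fun x => x + (j : ℝ) / n
    (∀ S : Set ℝ, MeasurableSet S →
      (μp S).toReal ≤ Real.exp (1 / (ψ * n)) * (μm S).toReal
      ∧ (μm S).toReal ≤ Real.exp (1 / (ψ * n)) * (μp S).toReal)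
    ∧ 1 / (ψ * n)
        = Real.sqrt (2 / (π * (1 - π))) * Real.sqrt (((m : ℝ) / n) / ((n : ℝ) - m)) := by
  intro binom lap μp μm
  have hn : (0 : ℝ) < n := by exact_mod_cast hm.trans hmn
  have hstep : ∀ j : ℕ, |((j : ℝ) + 1) / n - j / n| / ψ = 1 / (ψ * n) := fun j => by
    rw [← sub_div, add_sub_cancel_left, abs_of_pos (by positivity), div_div, mul_comm]
  have hpm : μp ≤ ENNReal.ofReal (Real.exp (1 / (ψ * n))) • μm :=
    Measure.bind_le_smul_bind measurable_from_top.aemeasurable measurable_from_top.aemeasurable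
      fun j => by
        have h := laplaceMeasure_map_add_le_smul hψ.le (((j : ℝ) + 1) / n) (j / n)
        rwa [hstep] at h
  have hmp : μm ≤ ENNReal.ofReal (Real.exp (1 / (ψ * n))) • μp :=
    Measure.bind_le_smul_bind measurable_from_top.aemeasurable measurable_from_top.aemeasurable
      fun j => by
        have h := laplaceMeasure_map_add_le_smul hψ.le (j / n) (((j : ℝ) + 1) / n)
        rwa [abs_sub_comm, hstep] at h
  refine ⟨fun S _ => ⟨?_, ?_⟩, ?_⟩
  · exact ENNReal.toReal_le_mul_toReal_of_le_ofReal_mul (Real.exp_nonneg _) (hpm S) (hmp S)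
  · exact ENNReal.toReal_le_mul_toReal_of_le_ofReal_mul (Real.exp_nonneg _) (hmp S) (hpm S)
  · exact one_div_mul_eq_sqrt_mul_sqrt_of_calibration (by exact_mod_cast hm)
      (by exact_mod_cast hmn) hπ0 hπ1 hψ hcal
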